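/- Let T(h) = (√2/(2(1−2k²)))·(2E(k) − K(k) + Π(2k², k)) with k = √(2+h)/2 for h ∈ (−2, 0). Then T(h) → ∞ as h → 0⁻. -/
import Mathlib


open Real Set Filter

/-- Complete elliptic integral of the first kind. -/
noncomputable def ellipticK (k : ℝ) : ℝ :=
  ∫ t in (0 : ℝ)..1, 1 / (Real.sqrt (1 - t^2) * Real.sqrt (1 - k^2 * t^2))

/-- Complete elliptic integral of the second kind. -/
noncomputable def ellipticE (k : ℝ) : ℝ :=
  ∫ t in (0 : ℝ)..1, Real.sqrt (1 - k^2 * t^2) / Real.sqrt (1 - t^2)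

/-- Complete elliptic integral of the third kind. -/
noncomputable def ellipticPi (n k : ℝ) : ℝ :=
  ∫ t in (0 : ℝ)..1,
    1 / ((1 - n * t^2) * Real.sqrt (1 - t^2) * Real.sqrt (1 - k^2 * t^2))

/-- The period function of the circular Sitnikov problem. -/
noncomputable def sitnikovT (h : ℝ) : ℝ :=
  let k := Real.sqrt (2 + h) / 2
  (Real.sqrt 2 / (2 * (1 - 2 * k^2))) *
    (2 * ellipticE k - ellipticK k + ellipticPi (2 * k^2) k)

lemma aux_rpow_int : IntervalIntegrable (fun t : ℝ => (1 - t) ^ (-(1/2) : ℝ))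
    MeasureTheory.volume 0 1 := by
  have h := ((intervalIntegral.intervalIntegrable_rpow' (a := 0) (b := 1)
    (r := -(1/2)) (by norm_num)).comp_sub_left 1).symm
  simpa using h

lemma aux_sqrt_int : IntervalIntegrable (fun t : ℝ => 1 / Real.sqrt (1 - t))
    MeasureTheory.volume 0 1 := by
  apply aux_rpow_int.mono_fun
  · exact Measurable.aestronglyMeasurable (by fun_prop)
  · filter_upwards [MeasureTheory.ae_restrict_mem measurableSet_uIoc] with t ht
    rw [Set.uIoc_of_le (by norm_num : (0:ℝ) ≤ 1)] at ht
    have h1 : (0:ℝ) ≤ 1 - t := by linarith [ht.2]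
    rw [Real.norm_eq_abs, Real.norm_eq_abs, abs_of_nonneg (by positivity),
      abs_of_nonneg (Real.rpow_nonneg h1 _), Real.rpow_neg h1, ← Real.sqrt_eq_rpow,
      one_div]

/-- Domination criterion for interval integrability on `[0,1]`. -/
lemma aux_dom {f : ℝ → ℝ} (hm : Measurable f) {C : ℝ}
    (hb : ∀ t ∈ Set.Ioc (0:ℝ) 1, |f t| ≤ C * (1 / Real.sqrt (1 - t))) :
    IntervalIntegrable f MeasureTheory.volume 0 1 := by
  apply (aux_sqrt_int.const_mul C).mono_fun hm.aestronglyMeasurable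
  filter_upwards [MeasureTheory.ae_restrict_mem measurableSet_uIoc] with t ht
  rw [Set.uIoc_of_le (by norm_num : (0:ℝ) ≤ 1)] at ht
  rw [Real.norm_eq_abs, Real.norm_eq_abs]
  exact (hb t ht).trans (le_abs_self _)

lemma key (h : ℝ) (h1 : -1 < h) (h2 : h < 0) :
    Real.sqrt 2 * (-h)⁻¹ ≤ sitnikovT h := by
  set k : ℝ := Real.sqrt (2 + h) / 2 with hkdef
  have h2pos : (0:ℝ) ≤ 2 + h := by linarith
  have hk2 : k ^ 2 = (2 + h) / 4 := by
    rw [hkdef, div_pow, Real.sq_sqrt h2pos]; norm_num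
  have hc0 : 0 ≤ k ^ 2 := sq_nonneg k
  have hc2 : k ^ 2 < 1 / 2 := by rw [hk2]; linarith
  have hs2 : (0:ℝ) < Real.sqrt 2 := Real.sqrt_pos.mpr (by norm_num)
  -- lower bound for B := √(1 - k²t²) on [0,1]
  have hB : ∀ t ∈ Set.Icc (0:ℝ) 1, (Real.sqrt 2)⁻¹ ≤ Real.sqrt (1 - k^2 * t^2) := by
    intro t ht
    rw [← Real.sqrt_inv]
    apply Real.sqrt_le_sqrt
    nlinarith [ht.1, ht.2, sq_nonneg t]
  have hBpos : ∀ t ∈ Set.Icc (0:ℝ) 1, 0 < Real.sqrt (1 - k^2 * t^2) := by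
    intro t ht
    exact lt_of_lt_of_le (by positivity) (hB t ht)
  have hApos : ∀ t ∈ Set.Ico (0:ℝ) 1, 0 < Real.sqrt (1 - t^2) := by
    intro t ht
    apply Real.sqrt_pos.mpr
    nlinarith [ht.1, ht.2]
  have hAB : ∀ t ∈ Set.Ico (0:ℝ) 1, Real.sqrt (1 - t) ≤ Real.sqrt (1 - t^2) := by
    intro t ht
    apply Real.sqrt_le_sqrt
    nlinarith [ht.1, ht.2]
  -- integrability of the K integrand
  have intK : IntervalIntegrable
      (fun t => 1 / (Real.sqrt (1 - t^2) * Real.sqrt (1 - k^2 * t^2)))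
      MeasureTheory.volume 0 1 := by
    apply aux_dom (by fun_prop) (C := Real.sqrt 2)
    intro t ht
    rcases eq_or_lt_of_le ht.2 with h1t | h1t
    · subst h1t; simp
    · have htI : t ∈ Set.Ico (0:ℝ) 1 := ⟨le_of_lt ht.1, h1t⟩
      have hA := hApos t htI
      have hB' := hB t ⟨le_of_lt ht.1, ht.2⟩
      have hs : 0 < Real.sqrt (1 - t) := Real.sqrt_pos.mpr (by linarith)
      rw [abs_of_nonneg (by positivity)]
      have hh : Real.sqrt (1 - t) * (Real.sqrt 2)⁻¹ ≤
          Real.sqrt (1 - t^2) * Real.sqrt (1 - k^2 * t^2) :=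
        mul_le_mul (hAB t htI) hB' (by positivity) (le_of_lt hA)
      calc 1 / (Real.sqrt (1 - t^2) * Real.sqrt (1 - k^2 * t^2))
          ≤ 1 / (Real.sqrt (1 - t) * (Real.sqrt 2)⁻¹) :=
            one_div_le_one_div_of_le (by positivity) hh
        _ = Real.sqrt 2 * (1 / Real.sqrt (1 - t)) := by
            field_simp
  -- integrability of the Π integrand
  have hn1 : 2 * k ^ 2 < 1 := by linarith
  have hDpos : ∀ t ∈ Set.Icc (0:ℝ) 1, 0 < 1 - (2 * k^2) * t^2 := by
    intro t ht
    have ht2 : t^2 ≤ 1 := by nlinarith [ht.1, ht.2]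
    nlinarith [mul_le_mul_of_nonneg_left ht2 hc0]
  have intPi : IntervalIntegrable
      (fun t => 1 / ((1 - (2 * k^2) * t^2) * Real.sqrt (1 - t^2) *
        Real.sqrt (1 - k^2 * t^2)))
      MeasureTheory.volume 0 1 := by
    apply aux_dom (by fun_prop) (C := (1 - 2 * k^2)⁻¹ * Real.sqrt 2)
    intro t ht
    rcases eq_or_lt_of_le ht.2 with h1t | h1t
    · subst h1t; simp
    · have htI : t ∈ Set.Ico (0:ℝ) 1 := ⟨le_of_lt ht.1, h1t⟩
      have hA := hApos t htI
      have hB' := hB t ⟨le_of_lt ht.1, ht.2⟩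
      have hD := hDpos t ⟨le_of_lt ht.1, ht.2⟩
      have hs : 0 < Real.sqrt (1 - t) := Real.sqrt_pos.mpr (by linarith)
      rw [abs_of_nonneg (by positivity)]
      have hD2 : 1 - 2 * k^2 ≤ 1 - (2 * k^2) * t^2 := by
        have ht2 : t^2 ≤ 1 := by nlinarith [ht.1, ht.2]
        nlinarith [mul_le_mul_of_nonneg_left ht2 hc0]
      have hh : (1 - 2 * k^2) * (Real.sqrt (1 - t) * (Real.sqrt 2)⁻¹) ≤
          (1 - (2 * k^2) * t^2) * Real.sqrt (1 - t^2) * Real.sqrt (1 - k^2 * t^2) := by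
        rw [mul_assoc]
        exact mul_le_mul hD2 (mul_le_mul (hAB t htI) hB' (by positivity) (le_of_lt hA))
          (by positivity) (le_of_lt hD)
      calc 1 / ((1 - (2 * k^2) * t^2) * Real.sqrt (1 - t^2) * Real.sqrt (1 - k^2 * t^2))
          ≤ 1 / ((1 - 2 * k^2) * (Real.sqrt (1 - t) * (Real.sqrt 2)⁻¹)) :=
            one_div_le_one_div_of_le
              (mul_pos (by linarith : (0:ℝ) < 1 - 2 * k^2) (by positivity)) hh
        _ = (1 - 2 * k^2)⁻¹ * Real.sqrt 2 * (1 / Real.sqrt (1 - t)) := by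
            field_simp
  -- integrability of the E integrand
  have intE : IntervalIntegrable
      (fun t => Real.sqrt (1 - k^2 * t^2) / Real.sqrt (1 - t^2))
      MeasureTheory.volume 0 1 := by
    apply aux_dom (by fun_prop) (C := 1)
    intro t ht
    rcases eq_or_lt_of_le ht.2 with h1t | h1t
    · subst h1t; simp
    · have htI : t ∈ Set.Ico (0:ℝ) 1 := ⟨le_of_lt ht.1, h1t⟩
      have hA := hApos t htI
      have hs : 0 < Real.sqrt (1 - t) := Real.sqrt_pos.mpr (by linarith)
      rw [abs_of_nonneg (by positivity), one_mul]
      have hnum : Real.sqrt (1 - k^2 * t^2) ≤ 1 := by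
        have h' := Real.sqrt_le_sqrt (show 1 - k^2 * t^2 ≤ 1 by
          nlinarith [mul_nonneg hc0 (sq_nonneg t)])
        simpa using h'
      calc Real.sqrt (1 - k^2 * t^2) / Real.sqrt (1 - t^2)
          ≤ 1 / Real.sqrt (1 - t^2) := by gcongr
        _ ≤ 1 / Real.sqrt (1 - t) :=
            one_div_le_one_div_of_le hs (hAB t htI)
  -- E ≥ 1/2
  have hE : (1:ℝ)/2 ≤ ellipticE k := by
    have hval : ∫ t in (0:ℝ)..1, (1 - t) = 1/2 := by
      rw [intervalIntegral.integral_sub intervalIntegrable_const intervalIntegral.intervalIntegrable_id,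
        intervalIntegral.integral_const, integral_id]
      norm_num
    rw [← hval]
    apply intervalIntegral.integral_mono_on (by norm_num)
      ((by fun_prop : Continuous fun t : ℝ => 1 - t).intervalIntegrable 0 1) intE
    intro t ht
    rcases eq_or_lt_of_le ht.2 with h1t | h1t
    · subst h1t
      simp
    · have htI : t ∈ Set.Ico (0:ℝ) 1 := ⟨ht.1, h1t⟩
      have hA := hApos t htI
      have hone : (1:ℝ) ≤ Real.sqrt (1 - k^2 * t^2) / Real.sqrt (1 - t^2) := by
        rw [le_div_iff₀ hA, one_mul]
        apply Real.sqrt_le_sqrt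
        nlinarith [ht.1, sq_nonneg t]
      linarith [ht.1]
  -- K ≤ Π
  have hKPi : ellipticK k ≤ ellipticPi (2 * k^2) k := by
    have hsub : ellipticPi (2 * k^2) k - ellipticK k =
        ∫ t in (0:ℝ)..1,
          (1 / ((1 - (2 * k^2) * t^2) * Real.sqrt (1 - t^2) * Real.sqrt (1 - k^2 * t^2))
            - 1 / (Real.sqrt (1 - t^2) * Real.sqrt (1 - k^2 * t^2))) :=
      (intervalIntegral.integral_sub intPi intK).symm
    have hnn : 0 ≤ ellipticPi (2 * k^2) k - ellipticK k := by
      rw [hsub]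
      apply intervalIntegral.integral_nonneg (by norm_num)
      intro t ht
      rcases eq_or_lt_of_le ht.2 with h1t | h1t
      · subst h1t; simp
      · have htI : t ∈ Set.Ico (0:ℝ) 1 := ⟨ht.1, h1t⟩
        have hA := hApos t htI
        have hBp := hBpos t ht
        have hD := hDpos t ht
        have hD1 : 1 - (2 * k^2) * t^2 ≤ 1 := by
          have h0 : 0 ≤ k^2 * t^2 := mul_nonneg hc0 (sq_nonneg t)
          linarith
        have hle : (1 - (2 * k^2) * t^2) * Real.sqrt (1 - t^2) * Real.sqrt (1 - k^2 * t^2)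
            ≤ Real.sqrt (1 - t^2) * Real.sqrt (1 - k^2 * t^2) :=
          mul_le_mul_of_nonneg_right
            (mul_le_of_le_one_left hA.le hD1) hBp.le
        have := one_div_le_one_div_of_le (mul_pos (mul_pos hD hA) hBp) hle
        linarith
    linarith
  -- assembling
  have hTeq : sitnikovT h = (Real.sqrt 2 / (2 * (1 - 2 * k^2))) *
      (2 * ellipticE k - ellipticK k + ellipticPi (2 * k^2) k) := by
    rw [sitnikovT, hkdef]
  have hbr : (1:ℝ) ≤ 2 * ellipticE k - ellipticK k + ellipticPi (2 * k^2) k := by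
    linarith
  have hpre : Real.sqrt 2 / (2 * (1 - 2 * k^2)) = Real.sqrt 2 * (-h)⁻¹ := by
    rw [hk2]
    have : 2 * (1 - 2 * ((2 + h) / 4)) = -h := by ring
    rw [this, div_eq_mul_inv]
  rw [hTeq, hpre]
  have hpos : 0 < Real.sqrt 2 * (-h)⁻¹ := by
    apply mul_pos hs2
    rw [inv_pos]; linarith
  exact le_mul_of_one_le_right hpos.le hbr

theorem stmt_10 :
    Tendsto sitnikovT (nhdsWithin (0 : ℝ) (Iio (0 : ℝ))) atTop := by
  have hneg : Tendsto (fun h : ℝ => -h) (nhdsWithin 0 (Iio 0)) (nhdsWithin 0 (Ioi 0)) := by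
    apply tendsto_nhdsWithin_of_tendsto_nhds_of_eventually_within
    · simpa using (continuous_neg.tendsto (0:ℝ)).mono_left nhdsWithin_le_nhds
    · filter_upwards [self_mem_nhdsWithin] with x hx
      exact neg_pos.mpr (Set.mem_Iio.mp hx)
  have hF : Tendsto (fun h : ℝ => Real.sqrt 2 * (-h)⁻¹) (nhdsWithin 0 (Iio 0)) atTop :=
    Tendsto.const_mul_atTop (Real.sqrt_pos.mpr (by norm_num))
      (tendsto_inv_nhdsGT_zero.comp hneg)
  apply tendsto_atTop_mono' _ _ hF
  filter_upwards [Ioo_mem_nhdsLT_of_mem (show (0:ℝ) ∈ Ioc (-1) 0 by norm_num)] with x hx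
  exact key x hx.1 hx.2
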